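/- If w is a subscript-increasing word on Σ₈ and φ(w) is subscript-increasing, then for any factor x y x′ of φ(w) with |x| = |y|/3 = |x′| odd and x containing a letter with an even subscript, the words x y x′ is not a pre-5/4-power, provided the letters of φ(w) with even subscripts form a factor of (0₀ 0₂ 1₄ 1₆)^ω. -/

import Mathlib

abbrev Sigma8 := ℤ × Fin 8

def phiAux (n : ℤ) : ℕ → List Sigma8
  | 0 => [(0,0),(1,1),(0,2),(0,3),(1,4),(n+3,5)]
  | 1 => [(1,6),(1,7),(0,0),(0,1),(0,2),(n+2,3)]
  | 2 => [(1,4),(1,5),(1,6),(0,7),(0,0),(n+3,1)]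
  | 3 => [(0,2),(1,3),(1,4),(0,5),(1,6),(n+2,7)]
  | 4 => [(0,0),(1,1),(0,2),(0,3),(1,4),(n+1,5)]
  | 5 => [(1,6),(1,7),(0,0),(0,1),(0,2),(n+2,3)]
  | 6 => [(1,4),(1,5),(1,6),(0,7),(0,0),(n+1,1)]
  | 7 => [(0,2),(1,3),(1,4),(0,5),(1,6),(n+2,7)]
  | _ => []

/-- The 6-uniform morphism φ on Σ₈, on a single letter. -/
def phi (a : Sigma8) : List Sigma8 := phiAux a.1 a.2.val

/-- φ extended to words by concatenation. -/
def phiW (w : List Sigma8) : List Sigma8 := w.flatMap phi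

/-- A word on Σ₈ is subscript-increasing if subscripts increase by 1 mod 8
from each letter to the next. -/
def SubIncr (w : List Sigma8) : Prop :=
  ∀ i : ℕ, (h : i + 1 < w.length) →
    (w.get ⟨i + 1, h⟩).2 = (w.get ⟨i, Nat.lt_of_succ_lt h⟩).2 + 1

/-- A 5/4-power: a word of the form x y x with x nonempty and |y| = 3|x|
(equivalently |xy| = 4|x|). -/
def IsPow54 {α : Type*} (w : List α) : Prop :=
  ∃ x y : List α, x ≠ [] ∧ y.length = 3 * x.length ∧ w = x ++ y ++ x

/-!
Suppose `φ(x y x')` were a 5/4-power. Comparing lengths, its two copies of the repeated factor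
are exactly `φ(x)` and `φ(x')`, so `φ(x) = φ(x')`, and since `φ` is uniform the letters of `x`
and `x'` in the same position have equal images. Because `φ(w)` is subscript-increasing and
`|x y| = 4|x|` with `|x|` odd, these letters have subscripts differing by 4 mod 8. For an even
subscript, `φ` can only identify two such letters when their integer parts differ by 2, whereas
the even-subscript letters of `φ(w)` come from `(0₀ 0₂ 1₄ 1₆)^ω` and have integer parts 0 or 1.
-/

lemma IsPow54.eq_of_eq_append {α : Type*} {p q r : List α} (h : IsPow54 (p ++ q ++ r))
    (hq : q.length = 3 * p.length) (hr : r.length = p.length) : p = r := by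
  obtain ⟨u, v, -, hv, huvu⟩ := h
  have hlen := congrArg List.length huvu
  simp only [List.length_append] at hlen
  have hru : r = u := (List.append_inj' huvu (by omega)).2
  rw [List.append_assoc, List.append_assoc] at huvu
  rw [(List.append_inj huvu (by omega)).1, hru]

lemma map_eq_map_of_flatMap_eq {α β : Type*} {f : α → List β} {k : ℕ}
    (hf : ∀ a, (f a).length = k) :
    ∀ {xs ys : List α}, xs.length = ys.length → xs.flatMap f = ys.flatMap f →
      xs.map f = ys.map f
  | [], [], _, _ => rfl
  | a :: xs, b :: ys, hlen, h => by
    rw [List.flatMap_cons, List.flatMap_cons] at h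
    obtain ⟨hab, hrest⟩ := List.append_inj h (by rw [hf, hf])
    rw [List.map_cons, List.map_cons, hab,
      map_eq_map_of_flatMap_eq hf (Nat.succ.inj hlen) hrest]

lemma phi_length (a : Sigma8) : (phi a).length = 6 := by
  obtain ⟨n, j⟩ := a
  fin_cases j <;> rfl

lemma phiW_length (w : List Sigma8) : (phiW w).length = 6 * w.length := by
  simp [phiW, phi_length, mul_comm]

lemma phiW_append (u v : List Sigma8) : phiW (u ++ v) = phiW u ++ phiW v :=
  List.flatMap_append

lemma fst_eq_of_phi_eq_of_snd_add_four {a b : Sigma8} (h : phi a = phi b)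
    (ha : a.2.val % 2 = 0) (hb : b.2.val = (a.2.val + 4) % 8) :
    b.1 = a.1 + 2 ∨ a.1 = b.1 + 2 := by
  obtain ⟨n, i⟩ := a
  obtain ⟨n', j⟩ := b
  dsimp only at ha hb ⊢
  have hi : i.val = 0 ∨ i.val = 2 ∨ i.val = 4 ∨ i.val = 6 := by omega
  simp only [phi] at h
  rcases hi with hi | hi | hi | hi <;> rw [hi] at h hb <;> rw [hb] at h <;>
    simp only [phiAux, List.cons.injEq, Prod.mk.injEq, and_true, true_and] at h <;> omega

lemma SubIncr.of_infix {u v : List Sigma8} (hv : SubIncr v) (h : u <:+: v) : SubIncr u := by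
  obtain ⟨s, t, rfl⟩ := h
  have hget : ∀ j (hj : j < u.length), (s ++ u ++ t)[s.length + j]'(by simp; omega) = u[j] := by
    intro j hj
    rw [List.getElem_append_left (by simp; omega), List.getElem_append_right (by omega)]
    simp
  intro i hi
  have key := hv (s.length + i) (by simp only [List.length_append] at hi ⊢; omega)
  simpa only [List.get_eq_getElem, Nat.add_assoc, hget _ hi, hget _ (Nat.lt_of_succ_lt hi)] using key

lemma SubIncr.snd_val_getElem_add {v : List Sigma8} (hv : SubIncr v) (i : ℕ) :
    ∀ (d : ℕ) (h : i + d < v.length),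
      v[i + d].2.val = (v[i].2.val + d) % 8
  | 0, _ => by simp [Nat.mod_eq_of_lt]
  | d + 1, h => by
    have hstep := hv (i + d) h
    simp only [List.get_eq_getElem] at hstep
    simp only [← Nat.add_assoc, hstep, Fin.val_add, hv.snd_val_getElem_add i d (by omega)]
    simp only [Fin.isValue, Fin.val_one]
    omega

lemma SubIncr.snd_val_getElem_append_append {p q r : List Sigma8} (hv : SubIncr (p ++ q ++ r))
    {k : ℕ} (hp : k < p.length) (hr : k < r.length) :
    r[k].2.val = (p[k].2.val + (p ++ q).length) % 8 := by
  have hshift := hv.snd_val_getElem_add k (p ++ q).length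
    (by simp only [List.length_append] at hr ⊢; omega)
  rw [List.getElem_append_right (Nat.le_add_left _ _),
    List.getElem_append_left (by simp only [List.length_append]; omega),
    List.getElem_append_left hp] at hshift
  simpa only [Nat.add_sub_cancel] using hshift

lemma fst_eq_zero_or_one_of_even {l : List Sigma8} {m : ℕ}
    (h : l.filter (fun a => a.2.val % 2 == 0) <:+:
      (List.replicate m ([((0:ℤ),(0:Fin 8)), (0,2), (1,4), (1,6)] : List Sigma8)).flatten)
    {c : Sigma8} (hc : c ∈ l) (hev : c.2.val % 2 = 0) : c.1 = 0 ∨ c.1 = 1 := by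
  have hmem := h.sublist.subset (List.mem_filter.mpr ⟨hc, by simp [hev]⟩)
  obtain ⟨block, hblock, hcb⟩ := List.mem_flatten.mp hmem
  rw [List.eq_of_mem_replicate hblock] at hcb
  simp only [List.mem_cons, List.not_mem_nil, or_false] at hcb
  rcases hcb with rfl | rfl | rfl | rfl <;> simp

theorem stmt16_general (w : List Sigma8) (hphiw : SubIncr (phiW w))
    (hper : ∃ m : ℕ, (phiW w).filter (fun a => a.2.val % 2 == 0) <:+:
        (List.replicate m ([((0:ℤ),(0:Fin 8)), (0,2), (1,4), (1,6)] : List Sigma8)).flatten)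
    (x y x' : List Sigma8) (hfac : (x ++ y ++ x') <:+: phiW w)
    (hlen : x'.length = x.length) (hy : y.length = 3 * x.length)
    (hodd : x.length % 2 = 1)
    (heven : ∃ a ∈ x, a.2.val % 2 = 0) :
    ¬ IsPow54 (phiW (x ++ y ++ x')) := by
  intro hpow
  obtain ⟨m, hper⟩ := hper
  rw [phiW_append, phiW_append] at hpow
  have hphi : x.map phi = x'.map phi :=
    map_eq_map_of_flatMap_eq phi_length hlen.symm
      (hpow.eq_of_eq_append (by rw [phiW_length, phiW_length, hy]; ring)
        (by rw [phiW_length, phiW_length, hlen]))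
  obtain ⟨a, hax, ha⟩ := heven
  obtain ⟨k, hk, rfl⟩ := List.getElem_of_mem hax
  have hk' : k < x'.length := hlen ▸ hk
  have hab : phi x[k] = phi x'[k] := by
    simpa [hk, hk'] using congrArg (·[k]?) hphi
  have hb : x'[k].2.val = (x[k].2.val + 4) % 8 := by
    rw [(hphiw.of_infix hfac).snd_val_getElem_append_append hk hk', List.length_append, hy]
    omega
  have hb_even : x'[k].2.val % 2 = 0 := by omega
  have hmem : ∀ c ∈ x ++ y ++ x', c ∈ phiW w := fun c hc => hfac.subset hc
  have ha_fst := fst_eq_zero_or_one_of_even hper (hmem _ (by simp)) ha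
  have hb_fst := fst_eq_zero_or_one_of_even hper (hmem _ (by simp)) hb_even
  have hdiff := fst_eq_of_phi_eq_of_snd_add_four hab ha hb
  omega

theorem stmt16 (w : List Sigma8) (hw : SubIncr w) (hphiw : SubIncr (phiW w))
    (hper : ∃ m : ℕ, (phiW w).filter (fun a => a.2.val % 2 == 0) <:+:
        (List.replicate m ([((0:ℤ),(0:Fin 8)), (0,2), (1,4), (1,6)] : List Sigma8)).flatten)
    (x y x' : List Sigma8) (hfac : (x ++ y ++ x') <:+: phiW w)
    (hlen : x'.length = x.length) (hy : y.length = 3 * x.length)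
    (hodd : x.length % 2 = 1)
    (heven : ∃ a ∈ x, a.2.val % 2 = 0) :
    ¬ IsPow54 (phiW (x ++ y ++ x')) :=
  stmt16_general w hphiw hper x y x' hfac hlen hy hodd heven
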